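/- Let L be any finitary first-order language. Every monadic-like L-formula φ (i.e., every atomic subformula of φ, including equality atoms, contains at most one variable) is logically equivalent (realized by the same assignments in every L-structure) to a Boolean combination of L-formulas each of which is either quantifier-free with at most one variable, or an existential formula ∃y ψ(y) in which y is the only variable and ψ is quantifier-free. -/

import Mathlib

/- STATEMENT 9: Every monadic-like formula (each atomic subformula contains at most one
variable) of a finitary first-order language is logically equivalent to a Boolean
combination of formulas each of which is either quantifier-free with at most one
variable, or an existential formula ∃y ψ(y) with y its only variable and ψ
quantifier-free. -/

open FirstOrder Language

universe u v w

namespace SatSub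

/-- The set of variables occurring in a term. -/
def termVars {L : FirstOrder.Language.{u, v}} {β : Type w} : L.Term β → Set β
  | .var x => {x}
  | .func _ ts => ⋃ i, termVars (ts i)

/-- A formula is monadic-like iff each of its atomic subformulas (including equality
atoms) contains at most one variable (free or bound). -/
def MonadicLike {L : FirstOrder.Language.{u, v}} {α : Type w} :
    ∀ {n : ℕ}, L.BoundedFormula α n → Prop
  | _, .falsum => True
  | _, .equal t₁ t₂ => (termVars t₁ ∪ termVars t₂).Subsingleton
  | _, .rel _ ts => (⋃ i, termVars (ts i)).Subsingleton
  | _, .imp f₁ f₂ => MonadicLike f₁ ∧ MonadicLike f₂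
  | _, .all f => MonadicLike f

/-- The set of free variables (from `α`) occurring in a bounded formula. -/
def freeVars {L : FirstOrder.Language.{u, v}} {α : Type w} :
    ∀ {n : ℕ}, L.BoundedFormula α n → Set α
  | _, .falsum => ∅
  | _, .equal t₁ t₂ => {a | Sum.inl a ∈ termVars t₁ ∪ termVars t₂}
  | _, .rel _ ts => {a | ∃ i, Sum.inl a ∈ termVars (ts i)}
  | _, .imp f₁ f₂ => freeVars f₁ ∪ freeVars f₂
  | _, .all f => freeVars f

/-- Boolean combinations (via negation, conjunction and disjunction) of formulas
satisfying a predicate `P`. -/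
inductive IsBoolComb {L : FirstOrder.Language.{u, v}} {α : Type w}
    (P : L.Formula α → Prop) : L.Formula α → Prop
  | base {φ} : P φ → IsBoolComb P φ
  | not {φ} : IsBoolComb P φ → IsBoolComb P (∼φ)
  | inf {φ ψ} : IsBoolComb P φ → IsBoolComb P ψ → IsBoolComb P (φ ⊓ ψ)
  | sup {φ ψ} : IsBoolComb P φ → IsBoolComb P ψ → IsBoolComb P (φ ⊔ ψ)

/-- Either a quantifier-free formula with at most one variable, or an existential
formula `∃ y, ψ y` in which the bound variable `y` is the only variable and `ψ` is
quantifier-free. -/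
def OneVarBasic {L : FirstOrder.Language.{u, v}} {α : Type w} (ρ : L.Formula α) : Prop :=
  (ρ.IsQF ∧ (freeVars ρ).Subsingleton) ∨
    ∃ ψ : L.BoundedFormula α 1, ψ.IsQF ∧ freeVars ψ = ∅ ∧ ρ = ψ.ex

/-! Allow `n` bound variables in scope and call a formula basic if it is quantifier-free in a
single (free or bound) variable, or is `∃ y, ψ y` with `ψ` quantifier-free in `y` alone; then
induct on the formula. The only nontrivial step is `∃ y, χ` for a Boolean combination `χ` of
basic formulas with `y` in scope. Each basic constituent of `χ` either mentions `y` alone or does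
not mention `y` at all, so `χ` and `¬χ` are equivalent to disjunctions `⋁ᵢ θᵢ(y) ∧ βᵢ` with `θᵢ`
quantifier-free in `y` and `βᵢ` free of `y`, and then `∃ y, χ` is `⋁ᵢ (∃ y, θᵢ y) ∧ βᵢ`. -/

variable {L : FirstOrder.Language.{u, v}} {α : Type w} {T : L.Theory} {n : ℕ}

theorem termVars_relabel {β : Type*} (g : β → α) (t : L.Term β) :
    termVars (t.relabel g) = g '' termVars t := by
  induction t with
  | var x => simp [termVars, Term.relabel]
  | func f ts ih => simp only [termVars, Term.relabel, Set.image_iUnion, ih]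

theorem realize_congr_of_termVars {β M : Type*} [L.Structure M] {t : L.Term β} {v v' : β → M}
    (h : ∀ x ∈ termVars t, v x = v' x) : t.realize v = t.realize v' := by
  induction t with
  | var x => exact h x rfl
  | func f ts ih =>
      simp only [Term.realize]
      congr 1
      funext i
      exact ih i fun x hx => h x (Set.mem_iUnion.2 ⟨i, hx⟩)

def allVars : ∀ {n : ℕ}, L.BoundedFormula α n → Set (α ⊕ Fin n)
  | _, .falsum => ∅
  | _, .equal t₁ t₂ => termVars t₁ ∪ termVars t₂
  | _, .rel _ ts => ⋃ i, termVars (ts i)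
  | _, .imp f₁ f₂ => allVars f₁ ∪ allVars f₂
  | _, .all f => {x | Sum.map id Fin.castSucc x ∈ allVars f}

@[simp]
theorem allVars_bot : allVars (⊥ : L.BoundedFormula α n) = ∅ := rfl

@[simp]
theorem allVars_not (φ : L.BoundedFormula α n) : allVars (∼φ) = allVars φ :=
  Set.union_empty _

@[simp]
theorem allVars_top : allVars (⊤ : L.BoundedFormula α n) = ∅ :=
  allVars_not _

@[simp]
theorem allVars_inf (φ ψ : L.BoundedFormula α n) :
    allVars (φ ⊓ ψ) = allVars φ ∪ allVars ψ := by
  show allVars φ ∪ (allVars ψ ∪ ∅) ∪ ∅ = _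
  simp only [Set.union_empty]

theorem mem_freeVars_iff (φ : L.BoundedFormula α n) (a : α) :
    a ∈ freeVars φ ↔ Sum.inl a ∈ allVars φ := by
  induction φ with
  | falsum | equal => exact Iff.rfl
  | rel R ts => exact Set.mem_iUnion.symm
  | imp f₁ f₂ ih₁ ih₂ => simp only [freeVars, allVars, Set.mem_union, ih₁, ih₂]
  | all f ih => exact ih

def IsQFIn (x : α ⊕ Fin n) (φ : L.BoundedFormula α n) : Prop :=
  φ.IsQF ∧ allVars φ ⊆ {x}

theorem isQFIn_top (x : α ⊕ Fin n) : IsQFIn x (⊤ : L.BoundedFormula α n) :=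
  ⟨BoundedFormula.IsQF.top, by simp⟩

theorem IsQFIn.not {x : α ⊕ Fin n} {φ : L.BoundedFormula α n} (h : IsQFIn x φ) :
    IsQFIn x (∼φ) :=
  ⟨h.1.not, by simpa using h.2⟩

theorem IsQFIn.inf {x : α ⊕ Fin n} {φ ψ : L.BoundedFormula α n} (hφ : IsQFIn x φ)
    (hψ : IsQFIn x ψ) : IsQFIn x (φ ⊓ ψ) :=
  ⟨hφ.1.inf hψ.1, (allVars_inf φ ψ).trans_subset (Set.union_subset hφ.2 hψ.2)⟩

/-- Only meaningful on quantifier-free formulas: `∀` is sent to `⊥`. -/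
def rename {γ : Type*} {m k : ℕ} (g : α ⊕ Fin m → γ ⊕ Fin k) :
    L.BoundedFormula α m → L.BoundedFormula γ k
  | .falsum => .falsum
  | .equal t₁ t₂ => .equal (t₁.relabel g) (t₂.relabel g)
  | .rel R ts => .rel R fun i => (ts i).relabel g
  | .imp f₁ f₂ => .imp (rename g f₁) (rename g f₂)
  | .all _ => .falsum

section Rename

variable {γ : Type*} {m k : ℕ} (g : α ⊕ Fin m → γ ⊕ Fin k)

theorem isQF_rename {φ : L.BoundedFormula α m} (hφ : φ.IsQF) : (rename g φ).IsQF := by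
  induction hφ with
  | falsum => exact BoundedFormula.IsQF.falsum
  | of_isAtomic h =>
      cases h with
      | equal => exact (BoundedFormula.IsAtomic.equal _ _).isQF
      | rel => exact (BoundedFormula.IsAtomic.rel _ _).isQF
  | imp _ _ ih₁ ih₂ => exact ih₁.imp ih₂

theorem allVars_rename_subset (φ : L.BoundedFormula α m) :
    allVars (rename g φ) ⊆ g '' allVars φ := by
  induction φ with
  | falsum | all => simp [rename, allVars]
  | equal t₁ t₂ => simp only [rename, allVars, termVars_relabel, Set.image_union, subset_rfl]
  | rel R ts => simp only [rename, allVars, termVars_relabel, Set.image_iUnion, subset_rfl]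
  | imp f₁ f₂ ih₁ ih₂ =>
      simp only [rename, allVars, Set.image_union]
      exact Set.union_subset_union (ih₁ g) (ih₂ g)

theorem realize_rename {φ : L.BoundedFormula α m} (hφ : φ.IsQF) {M : Type*} [L.Structure M]
    {v : α → M} {xs : Fin m → M} {w : γ → M} {ys : Fin k → M}
    (h : ∀ x ∈ allVars φ, Sum.elim w ys (g x) = Sum.elim v xs x) :
    (rename g φ).Realize w ys ↔ φ.Realize v xs := by
  induction hφ with
  | falsum => rfl
  | of_isAtomic ha =>
      cases ha with
      | equal t₁ t₂ =>
          show (t₁.relabel g).realize _ = (t₂.relabel g).realize _ ↔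
            t₁.realize _ = t₂.realize _
          simp only [Term.realize_relabel]
          rw [realize_congr_of_termVars (v := Sum.elim w ys ∘ g) fun x hx => h x (Or.inl hx),
            realize_congr_of_termVars (v := Sum.elim w ys ∘ g) fun x hx => h x (Or.inr hx)]
      | rel R ts =>
          show Structure.RelMap R (fun i => ((ts i).relabel g).realize _) ↔
            Structure.RelMap R (fun i => (ts i).realize _)
          simp only [Term.realize_relabel]
          rw [funext fun i => realize_congr_of_termVars (v := Sum.elim w ys ∘ g) fun x hx =>
            h x (Set.mem_iUnion.2 ⟨i, hx⟩)]
  | imp _ _ ih₁ ih₂ =>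
      exact imp_congr (ih₁ fun x hx => h x (Or.inl hx)) (ih₂ fun x hx => h x (Or.inr hx))

variable {x : α ⊕ Fin m} {φ : L.BoundedFormula α m}

theorem IsQFIn.rename_const (hφ : IsQFIn x φ) (x' : γ ⊕ Fin k) :
    IsQFIn x' (rename (fun _ => x') φ) :=
  ⟨isQF_rename _ hφ.1, (allVars_rename_subset _ φ).trans (Set.image_subset_iff.2 fun _ _ => rfl)⟩

theorem IsQFIn.realize_rename_const (hφ : IsQFIn x φ) {M : Type*} [L.Structure M]
    {v : α → M} {xs : Fin m → M} {w : γ → M} {ys : Fin k → M} {x' : γ ⊕ Fin k}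
    (hx : Sum.elim w ys x' = Sum.elim v xs x) :
    (rename (fun _ => x') φ).Realize w ys ↔ φ.Realize v xs :=
  realize_rename _ hφ.1 fun _ hy => (hφ.2 hy : _ = x) ▸ hx

end Rename

/-- The analogue of `OneVarBasic` with bound variables in scope. -/
def IsBasic (ρ : L.BoundedFormula α n) : Prop :=
  (ρ.IsQF ∧ (allVars ρ).Subsingleton) ∨
    ∃ ψ : L.BoundedFormula α (n + 1), IsQFIn (Sum.inr (Fin.last n)) ψ ∧ ρ = ψ.ex

theorem isBasic_bot : IsBasic (⊥ : L.BoundedFormula α n) :=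
  Or.inl ⟨BoundedFormula.isQF_bot, Set.subsingleton_empty⟩

theorem IsBasic.oneVarBasic {ρ : L.Formula α} (h : IsBasic ρ) : OneVarBasic ρ := by
  rcases h with ⟨hqf, hss⟩ | ⟨ψ, hψ, rfl⟩
  · exact Or.inl ⟨hqf, fun a ha b hb =>
      Sum.inl.inj (hss ((mem_freeVars_iff ρ a).1 ha) ((mem_freeVars_iff ρ b).1 hb))⟩
  · refine Or.inr ⟨ψ, hψ.1, Set.eq_empty_of_forall_notMem fun a ha => ?_, rfl⟩
    exact Sum.inl_ne_inr (hψ.2 ((mem_freeVars_iff ψ a).1 ha))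

inductive IsBoundedBoolComb (P : L.BoundedFormula α n → Prop) : L.BoundedFormula α n → Prop
  | base {φ} : P φ → IsBoundedBoolComb P φ
  | not {φ} : IsBoundedBoolComb P φ → IsBoundedBoolComb P (∼φ)
  | inf {φ ψ} : IsBoundedBoolComb P φ → IsBoundedBoolComb P ψ → IsBoundedBoolComb P (φ ⊓ ψ)
  | sup {φ ψ} : IsBoundedBoolComb P φ → IsBoundedBoolComb P ψ → IsBoundedBoolComb P (φ ⊔ ψ)

namespace IsBoundedBoolComb

variable {P : L.BoundedFormula α n → Prop}

theorem foldr_sup (hbot : IsBoundedBoolComb P ⊥) {l : List (L.BoundedFormula α n)}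
    (hl : ∀ φ ∈ l, IsBoundedBoolComb P φ) : IsBoundedBoolComb P (l.foldr (· ⊔ ·) ⊥) := by
  induction l with
  | nil => exact hbot
  | cons φ l ih =>
      exact .sup (hl φ List.mem_cons_self) (ih fun ψ hψ => hl ψ (List.mem_cons_of_mem _ hψ))

theorem iSup {ι : Type*} [Finite ι] (hbot : IsBoundedBoolComb P ⊥)
    {f : ι → L.BoundedFormula α n} (hf : ∀ i, IsBoundedBoolComb P (f i)) :
    IsBoundedBoolComb P (BoundedFormula.iSup f) :=
  foldr_sup hbot <| by simpa using hf

theorem isBoolComb {P : L.Formula α → Prop} {Q : L.Formula α → Prop} (hPQ : ∀ φ, P φ → Q φ)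
    {χ : L.Formula α} (h : IsBoundedBoolComb P χ) : IsBoolComb Q χ := by
  induction h with
  | base hφ => exact .base (hPQ _ hφ)
  | not _ ih => exact .not ih
  | inf _ _ ih₁ ih₂ => exact .inf ih₁ ih₂
  | sup _ _ ih₁ ih₂ => exact .sup ih₁ ih₂

end IsBoundedBoolComb

theorem exists_map_castSucc_eq {x : α ⊕ Fin (n + 1)} (hx : x ≠ Sum.inr (Fin.last n)) :
    ∃ x' : α ⊕ Fin n, Sum.map id Fin.castSucc x' = x := by
  rcases x with a | j
  · exact ⟨.inl a, rfl⟩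
  · have hj : j ≠ Fin.last n := fun h => hx (congrArg _ h)
    exact ⟨.inr (j.castPred hj), congrArg _ (Fin.castSucc_castPred j hj)⟩

theorem IsQFIn.exists_isBasic_iff_liftAt {x : α ⊕ Fin (n + 1)} {ρ : L.BoundedFormula α (n + 1)}
    (hρ : IsQFIn x ρ) (hx : x ≠ Sum.inr (Fin.last n)) :
    ∃ ρ' : L.BoundedFormula α n, IsBasic ρ' ∧ ρ ⇔[T] ρ'.liftAt 1 n := by
  obtain ⟨x', rfl⟩ := exists_map_castSucc_eq hx
  have hρ' := hρ.rename_const x'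
  refine ⟨rename (fun _ => x') ρ, Or.inl ⟨hρ'.1, Set.subsingleton_singleton.anti hρ'.2⟩, ?_⟩
  intro M v xs
  rw [BoundedFormula.realize_iff, BoundedFormula.realize_liftAt_one_self,
    hρ.realize_rename_const]
  cases x' <;> rfl

theorem exists_isBasic_iff_liftAt_ex {ψ : L.BoundedFormula α (n + 2)}
    (hψ : IsQFIn (Sum.inr (Fin.last (n + 1))) ψ) :
    ∃ ρ' : L.BoundedFormula α n, IsBasic ρ' ∧ ψ.ex ⇔[T] ρ'.liftAt 1 n := by
  have hψ' := hψ.rename_const (Sum.inr (Fin.last n) : α ⊕ Fin (n + 1))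
  refine ⟨(rename (fun _ => Sum.inr (Fin.last n)) ψ).ex, Or.inr ⟨_, hψ', rfl⟩, ?_⟩
  intro M v xs
  simp only [BoundedFormula.realize_iff, BoundedFormula.realize_liftAt_one_self,
    BoundedFormula.realize_ex]
  exact exists_congr fun y => (hψ.realize_rename_const (by simp)).symm

theorem IsBasic.isQFIn_last_or_exists_iff_liftAt {ρ : L.BoundedFormula α (n + 1)}
    (h : IsBasic ρ) : IsQFIn (Sum.inr (Fin.last n)) ρ ∨
      ∃ ρ' : L.BoundedFormula α n, IsBasic ρ' ∧ ρ ⇔[T] ρ'.liftAt 1 n := by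
  rcases h with ⟨hqf, hss⟩ | ⟨ψ, hψ, rfl⟩
  · by_cases hlast : allVars ρ ⊆ {Sum.inr (Fin.last n)}
    · exact Or.inl ⟨hqf, hlast⟩
    · obtain ⟨x, hx, hne⟩ := Set.not_subset.1 hlast
      exact Or.inr <| IsQFIn.exists_isBasic_iff_liftAt ⟨hqf, fun y hy => hss hy hx⟩ hne
  · exact Or.inr (exists_isBasic_iff_liftAt_ex hψ)

def IsSeparated (T : L.Theory) (χ : L.BoundedFormula α (n + 1)) : Prop :=
  ∃ (ι : Type) (_ : Finite ι) (θ : ι → L.BoundedFormula α (n + 1))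
    (β : ι → L.BoundedFormula α n),
    (∀ i, IsQFIn (Sum.inr (Fin.last n)) (θ i) ∧ IsBoundedBoolComb IsBasic (β i)) ∧
      χ ⇔[T] BoundedFormula.iSup fun i => θ i ⊓ (β i).liftAt 1 n

namespace IsSeparated

variable {χ ψ : L.BoundedFormula α (n + 1)}

theorem of_iff (h : χ ⇔[T] ψ) (hψ : IsSeparated T ψ) : IsSeparated T χ :=
  let ⟨ι, hι, θ, β, hθβ, hψ⟩ := hψ
  ⟨ι, hι, θ, β, hθβ, h.trans hψ⟩

theorem of_isQFIn (hχ : IsQFIn (Sum.inr (Fin.last n)) χ) : IsSeparated T χ := by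
  refine ⟨Unit, inferInstance, fun _ => χ, fun _ => ⊤,
    fun _ => ⟨hχ, .not (.base isBasic_bot)⟩, fun M v xs => ?_⟩
  simp

theorem liftAt {β : L.BoundedFormula α n} (hβ : IsBoundedBoolComb IsBasic β) :
    IsSeparated T (β.liftAt 1 n) := by
  refine ⟨Unit, inferInstance, fun _ => ⊤, fun _ => β,
    fun _ => ⟨isQFIn_top _, hβ⟩, fun M v xs => ?_⟩
  simp

theorem sup (hχ : IsSeparated T χ) (hψ : IsSeparated T ψ) : IsSeparated T (χ ⊔ ψ) := by
  obtain ⟨ι, _, θ, β, hθβ, hχ⟩ := hχ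
  obtain ⟨ι', _, θ', β', hθβ', hψ⟩ := hψ
  refine ⟨ι ⊕ ι', inferInstance, Sum.elim θ θ', Sum.elim β β',
    Sum.forall.2 ⟨hθβ, hθβ'⟩, fun M v xs => ?_⟩
  simp [hχ.realize_bd_iff, hψ.realize_bd_iff]

theorem inf (hχ : IsSeparated T χ) (hψ : IsSeparated T ψ) : IsSeparated T (χ ⊓ ψ) := by
  obtain ⟨ι, _, θ, β, hθβ, hχ⟩ := hχ
  obtain ⟨ι', _, θ', β', hθβ', hψ⟩ := hψ
  refine ⟨ι × ι', inferInstance, fun i => θ i.1 ⊓ θ' i.2, fun i => β i.1 ⊓ β' i.2,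
    fun i => ⟨(hθβ i.1).1.inf (hθβ' i.2).1, (hθβ i.1).2.inf (hθβ' i.2).2⟩, fun M v xs => ?_⟩
  simp only [BoundedFormula.realize_iff, BoundedFormula.realize_inf, hχ.realize_bd_iff,
    hψ.realize_bd_iff, BoundedFormula.realize_iSup, BoundedFormula.realize_liftAt_one_self,
    Prod.exists]
  constructor
  · rintro ⟨⟨i, hθ, hβ⟩, ⟨j, hθ', hβ'⟩⟩
    exact ⟨i, j, ⟨hθ, hθ'⟩, hβ, hβ'⟩
  · rintro ⟨i, j, ⟨hθ, hθ'⟩, hβ, hβ'⟩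
    exact ⟨⟨i, hθ, hβ⟩, ⟨j, hθ', hβ'⟩⟩

theorem exists_ex_iff (hχ : IsSeparated T χ) :
    ∃ χ' : L.BoundedFormula α n, IsBoundedBoolComb IsBasic χ' ∧ χ.ex ⇔[T] χ' := by
  obtain ⟨ι, _, θ, β, hθβ, hχ⟩ := hχ
  refine ⟨BoundedFormula.iSup fun i => (θ i).ex ⊓ β i,
    .iSup (.base isBasic_bot) fun i => .inf (.base (Or.inr ⟨θ i, (hθβ i).1, rfl⟩)) (hθβ i).2,
    fun M v xs => ?_⟩
  simp only [BoundedFormula.realize_iff, BoundedFormula.realize_ex, hχ.realize_bd_iff,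
    BoundedFormula.realize_iSup, BoundedFormula.realize_inf,
    BoundedFormula.realize_liftAt_one_self, Fin.snoc_comp_castSucc]
  constructor
  · rintro ⟨y, i, hθ, hβ⟩
    exact ⟨i, ⟨y, hθ⟩, hβ⟩
  · rintro ⟨i, ⟨y, hθ⟩, hβ⟩
    exact ⟨y, i, hθ, hβ⟩

end IsSeparated

namespace IsBoundedBoolComb

theorem isSeparated_and_not {χ : L.BoundedFormula α (n + 1)}
    (h : IsBoundedBoolComb IsBasic χ) : IsSeparated T χ ∧ IsSeparated T (∼χ) := by
  induction h with
  | base hρ =>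
      rcases hρ.isQFIn_last_or_exists_iff_liftAt (T := T) with hρ | ⟨ρ', hρ', hiff⟩
      · exact ⟨.of_isQFIn hρ, .of_isQFIn hρ.not⟩
      · exact ⟨.of_iff hiff (.liftAt (.base hρ')),
          .of_iff (hiff.not.trans fun M v xs => by simp) (.liftAt (.not (.base hρ')))⟩
  | not _ ih => exact ⟨ih.2, .of_iff (fun M v xs => by simp) ih.1⟩
  | inf _ _ ih₁ ih₂ =>
      exact ⟨ih₁.1.inf ih₂.1, .of_iff (fun M v xs => by simp [imp_iff_not_or]) (ih₁.2.sup ih₂.2)⟩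
  | sup _ _ ih₁ ih₂ =>
      exact ⟨ih₁.1.sup ih₂.1, .of_iff (fun M v xs => by simp) (ih₁.2.inf ih₂.2)⟩

theorem exists_ex_iff {χ : L.BoundedFormula α (n + 1)} (h : IsBoundedBoolComb IsBasic χ) :
    ∃ χ' : L.BoundedFormula α n, IsBoundedBoolComb IsBasic χ' ∧ χ.ex ⇔[T] χ' :=
  (h.isSeparated_and_not (T := T)).1.exists_ex_iff

end IsBoundedBoolComb

theorem MonadicLike.exists_isBoundedBoolComb_iff {f : L.BoundedFormula α n} (hf : MonadicLike f) :
    ∃ χ : L.BoundedFormula α n, IsBoundedBoolComb IsBasic χ ∧ f ⇔[T] χ := by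
  induction f with
  | falsum => exact ⟨⊥, .base isBasic_bot, .refl _⟩
  | equal t₁ t₂ =>
      exact ⟨_, .base (Or.inl ⟨(BoundedFormula.IsAtomic.equal t₁ t₂).isQF, hf⟩), .refl _⟩
  | rel R ts => exact ⟨_, .base (Or.inl ⟨(BoundedFormula.IsAtomic.rel R ts).isQF, hf⟩), .refl _⟩
  | imp f₁ f₂ ih₁ ih₂ =>
      obtain ⟨χ₁, h₁, e₁⟩ := ih₁ hf.1
      obtain ⟨χ₂, h₂, e₂⟩ := ih₂ hf.2
      exact ⟨∼χ₁ ⊔ χ₂, .sup (.not h₁) h₂, (e₁.imp e₂).trans (BoundedFormula.imp_iff_not_sup _ _)⟩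
  | all f ih =>
      obtain ⟨χ₁, h₁, e₁⟩ := ih hf
      obtain ⟨χ₂, h₂, e₂⟩ := (IsBoundedBoolComb.not h₁).exists_ex_iff (T := T)
      exact ⟨∼χ₂, .not h₂, e₁.all.trans ((BoundedFormula.all_iff_not_ex_not _).trans e₂.not)⟩

theorem monadicLike_equiv_boolComb
    {L : FirstOrder.Language.{u, v}} {α : Type w} (φ : L.Formula α)
    (hφ : MonadicLike φ) :
    ∃ χ : L.Formula α, IsBoolComb OneVarBasic χ ∧
      ∀ (M : Type (max u v)) [L.Structure M] [Nonempty M] (va : α → M),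
        φ.Realize va ↔ χ.Realize va := by
  obtain ⟨χ, hχ, hiff⟩ := hφ.exists_isBoundedBoolComb_iff (T := ∅)
  exact ⟨χ, hχ.isBoolComb fun _ => IsBasic.oneVarBasic, fun M _ _ _ => hiff.realize_iff⟩

end SatSub
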